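/- arXiv:2311.02490 — 3 statements merged into one kernel-verified Lean document; each statement's English description precedes it below -/
import Mathlib

section
/- Let 0 < w < 1. The function f(a) = arctan(a) − arctan((1−w)·a) on a ∈ (0, ∞) attains its maximum at a = 1/√(1−w), and the maximum value θ satisfies sin(θ) = w/(2−w). -/
open Real

lemma arctan_sub' {x y : ℝ} (h : -(x * y) < 1) :
    arctan x - arctan y = arctan ((x - y) / (1 + x * y)) := by
  have := Real.arctan_add (x := x) (y := -y) (by rw [mul_neg]; exact h)
  rw [arctan_neg] at this
  rw [sub_eq_add_neg, this]
  ring_nf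

/-- For `0 < w < 1`, `f a = arctan a − arctan ((1−w) a)` on `(0, ∞)` attains its
maximum at `a = 1/√(1−w)`, and the maximum value `θ` satisfies `sin θ = w/(2−w)`. -/
theorem stmt_2 (w : ℝ) (hw0 : 0 < w) (hw1 : w < 1) :
    (∀ a ∈ Set.Ioi (0 : ℝ),
        arctan a - arctan ((1 - w) * a) ≤
          arctan (1 / Real.sqrt (1 - w)) - arctan ((1 - w) * (1 / Real.sqrt (1 - w)))) ∧
      Real.sin (arctan (1 / Real.sqrt (1 - w)) - arctan ((1 - w) * (1 / Real.sqrt (1 - w))))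
        = w / (2 - w) := by
  set c := 1 - w with hc
  have hc0 : 0 < c := by linarith
  set s := Real.sqrt c with hs
  have hs0 : 0 < s := Real.sqrt_pos.mpr hc0
  have hs2 : s ^ 2 = c := Real.sq_sqrt hc0.le
  -- the value at the maximizer
  have hca : c * (1 / s) = s := by
    rw [← hs2]; field_simp
  have hRHS : arctan (1 / s) - arctan (c * (1 / s)) = arctan (w / (2 * s)) := by
    rw [hca, arctan_sub' (by nlinarith [mul_pos (one_div_pos.mpr hs0) hs0])]
    congr 1
    have h1 : (1 / s) * s = 1 := by field_simp
    rw [h1]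
    field_simp
    nlinarith [hs2]
  constructor
  · intro a ha
    have ha0 : (0 : ℝ) < a := ha
    rw [hRHS, arctan_sub' (by nlinarith [mul_pos hc0 (mul_pos ha0 ha0)])]
    apply Real.arctan_strictMono.monotone
    rw [div_le_div_iff₀ (by nlinarith [mul_pos hc0 (mul_pos ha0 ha0)]) (by positivity)]
    rw [← hs2]
    have hsw : s ^ 2 = 1 - w := hs2.trans hc
    have h3 : (s ^ 2 - (1 - w)) * (2 * s * a) = 0 := by rw [hsw]; ring
    nlinarith [h3, mul_nonneg hw0.le (sq_nonneg (s * a - 1))]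
  · rw [hRHS, Real.sin_arctan]
    have key : Real.sqrt (1 + (w / (2 * s)) ^ 2) = (2 - w) / (2 * s) := by
      rw [show 1 + (w / (2 * s)) ^ 2 = ((2 - w) / (2 * s)) ^ 2 by
        field_simp; nlinarith [hs2]]
      exact Real.sqrt_sq (div_nonneg (by linarith) (by positivity))
    rw [key]
    field_simp
end

section
/- Let x₁,…,xₙ ∈ ℝ^p and define F: ℝ^n → ℝ^n by F_j(w) = −log( x_jᵀ · ( (p/n) · Σ_{i=1}^n e^{w_i} x_i x_iᵀ )^{−1} · x_j ), wherever the matrix Σ(w) = (p/n) Σ_i e^{w_i} x_i x_iᵀ is invertible. If w* is a fixed point of F (i.e., F(w*) = w*), then the Jacobian matrix ∇F(w*) is symmetric; in particular, ∂F_j/∂w_i (w*) = e^{w*_j} · (p/n) · e^{w*_i} · (x_jᵀ Σ(w*)^{−1} x_i)² = ∂F_i/∂w_j (w*). -/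
open Matrix Real

/-- The matrix `Σ(w) = (p/n) Σ_i e^{w_i} x_i x_iᵀ`. -/
noncomputable def tmeSigma {p n : ℕ} (x : Fin n → Fin p → ℝ) (w : Fin n → ℝ) :
    Matrix (Fin p) (Fin p) ℝ :=
  ((p : ℝ) / (n : ℝ)) • ∑ i, Real.exp (w i) • Matrix.vecMulVec (x i) (x i)

/-- The fixed-point map `F_j(w) = −log(x_jᵀ Σ(w)⁻¹ x_j)`. -/
noncomputable def tmeF {p n : ℕ} (x : Fin n → Fin p → ℝ) (w : Fin n → ℝ) : Fin n → ℝ :=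
  fun j => -Real.log (x j ⬝ᵥ (tmeSigma x w)⁻¹.mulVec (x j))

namespace Stmt6Aux

attribute [local instance] Matrix.linftyOpNormedAddCommGroup Matrix.linftyOpNormedSpace
  Matrix.linftyOpNormedRing Matrix.linftyOpNormedAlgebra

variable {p n : ℕ}

/-- Evaluation `M ↦ a ⬝ᵥ M *ᵥ b` as a continuous linear map. -/
noncomputable def evalCLM (a b : Fin p → ℝ) : Matrix (Fin p) (Fin p) ℝ →L[ℝ] ℝ :=
  LinearMap.toContinuousLinearMap
    { toFun := fun M => a ⬝ᵥ M.mulVec b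
      map_add' := fun M N => by simp [Matrix.add_mulVec, dotProduct_add]
      map_smul' := fun c M => by
        simp [Matrix.smul_mulVec, dotProduct_smul, smul_eq_mul] }

@[simp] lemma evalCLM_apply (a b : Fin p → ℝ) (M : Matrix (Fin p) (Fin p) ℝ) :
    evalCLM a b M = a ⬝ᵥ M.mulVec b := rfl

lemma vecMulVec_mulVec' (u v w : Fin p → ℝ) :
    Matrix.vecMulVec u v *ᵥ w = (v ⬝ᵥ w) • u := by
  funext a
  simp [Matrix.mulVec, Matrix.vecMulVec_apply, dotProduct, Finset.mul_sum,
    mul_comm, mul_assoc, mul_left_comm]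

/-- The derivative of `tmeSigma x`. -/
noncomputable def sigmaDeriv (x : Fin n → Fin p → ℝ) (w : Fin n → ℝ) :
    (Fin n → ℝ) →L[ℝ] Matrix (Fin p) (Fin p) ℝ :=
  ((p : ℝ) / (n : ℝ)) • ∑ i, ((Real.exp (w i) • ContinuousLinearMap.proj i).smulRight
    (Matrix.vecMulVec (x i) (x i)))

lemma hasFDerivAt_tmeSigma (x : Fin n → Fin p → ℝ) (w : Fin n → ℝ) :
    HasFDerivAt (tmeSigma x) (sigmaDeriv x w) w := by
  have h : ∀ i : Fin n,
      HasFDerivAt (fun w : Fin n → ℝ => Real.exp (w i) • Matrix.vecMulVec (x i) (x i))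
        ((Real.exp (w i) • (ContinuousLinearMap.proj i : (Fin n → ℝ) →L[ℝ] ℝ)).smulRight
          (Matrix.vecMulVec (x i) (x i))) w := by
    intro i
    have h1 : HasFDerivAt (fun w : Fin n → ℝ => w i)
        (ContinuousLinearMap.proj i : (Fin n → ℝ) →L[ℝ] ℝ) w :=
      hasFDerivAt_apply i w
    exact h1.exp.smul_const _
  have hsum := HasFDerivAt.fun_sum (fun i (_ : i ∈ Finset.univ) => h i)
  exact hsum.const_smul ((p : ℝ) / (n : ℝ))

lemma sigmaDeriv_single (x : Fin n → Fin p → ℝ) (w : Fin n → ℝ) (i : Fin n) :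
    sigmaDeriv x w (Pi.single i 1)
      = ((p : ℝ) / (n : ℝ) * Real.exp (w i)) • Matrix.vecMulVec (x i) (x i) := by
  simp only [sigmaDeriv, ContinuousLinearMap.smul_apply, ContinuousLinearMap.sum_apply,
    ContinuousLinearMap.smulRight_apply, ContinuousLinearMap.smul_apply,
    ContinuousLinearMap.proj_apply]
  rw [Finset.sum_eq_single i]
  · simp [smul_smul]
  · intro b _ hb
    simp [Pi.single_eq_of_ne hb]
  · simp

end Stmt6Aux

attribute [local instance] Matrix.linftyOpNormedAddCommGroup Matrix.linftyOpNormedSpace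
  Matrix.linftyOpNormedRing Matrix.linftyOpNormedAlgebra

open Stmt6Aux in
/-- At a fixed point `w*` of `F`, the Jacobian `∇F(w*)` is symmetric; in particular
`∂F_j/∂w_i(w*) = e^{w*_j} (p/n) e^{w*_i} (x_jᵀ Σ(w*)⁻¹ x_i)²`, which is symmetric in `i, j`. -/
theorem stmt_6 {p n : ℕ} (hp : 0 < p) (hn : 0 < n) (x : Fin n → Fin p → ℝ)
    (wstar : Fin n → ℝ)
    (hposdef : ∀ w : Fin n → ℝ, w ∈ Metric.ball wstar 1 → (tmeSigma x w).PosDef)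
    (hfix : tmeF x wstar = wstar) :
    ∀ i j : Fin n,
      (fderiv ℝ (tmeF x) wstar) (Pi.single i 1) j
          = Real.exp (wstar j) * ((p : ℝ) / (n : ℝ)) * Real.exp (wstar i) *
              (x j ⬝ᵥ (tmeSigma x wstar)⁻¹.mulVec (x i)) ^ 2 ∧
        (fderiv ℝ (tmeF x) wstar) (Pi.single i 1) j
          = (fderiv ℝ (tmeF x) wstar) (Pi.single j 1) i := by
  classical
  set A := tmeSigma x wstar with hAdef
  have hA : A.PosDef := hposdef wstar (Metric.mem_ball_self one_pos)
  have hAunit : IsUnit A := hA.isUnit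
  have hAinv : A⁻¹.PosDef := hA.inv
  -- symmetry of A and A⁻¹
  have hAT : Aᵀ = A := by
    rw [hAdef]
    unfold tmeSigma
    rw [Matrix.transpose_smul, Matrix.transpose_sum]
    congr 1
    refine Finset.sum_congr rfl fun i _ => ?_
    rw [Matrix.transpose_smul]
    congr 1
    ext a b
    simp [Matrix.transpose_apply, Matrix.vecMulVec_apply, mul_comm]
  have hT : A⁻¹ᵀ = A⁻¹ := by rw [Matrix.transpose_nonsing_inv, hAT]
  have hsymm : ∀ u v : Fin p → ℝ, u ⬝ᵥ A⁻¹ *ᵥ v = v ⬝ᵥ A⁻¹ *ᵥ u := by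
    intro u v
    rw [Matrix.dotProduct_mulVec, ← Matrix.mulVec_transpose, hT, dotProduct_comm]
  -- the value q j
  set q : Fin n → ℝ := fun j => x j ⬝ᵥ A⁻¹ *ᵥ x j with hqdef
  have hqfix : ∀ j, -Real.log (q j) = wstar j := by
    intro j
    have := congrFun hfix j
    simpa [tmeF, hqdef, hAdef] using this
  have hqpos : ∀ j, x j ≠ 0 → 0 < q j := by
    intro j hj
    have := hAinv.dotProduct_mulVec_pos hj
    simpa [hqdef] using this
  have hqinv : ∀ j, x j ≠ 0 → (q j)⁻¹ = Real.exp (wstar j) := by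
    intro j hj
    have hq := hqpos j hj
    have hlog : Real.log (q j) = -wstar j := by
      have := hqfix j; linarith
    have : q j = Real.exp (-wstar j) := by
      rw [← hlog, Real.exp_log hq]
    rw [this, ← Real.exp_neg, neg_neg]
  -- derivative of the inverse map composed with tmeSigma
  set S := sigmaDeriv x wstar with hSdef
  set T : (Fin n → ℝ) →L[ℝ] Matrix (Fin p) (Fin p) ℝ :=
    (-(ContinuousLinearMap.mulLeftRight ℝ (Matrix (Fin p) (Fin p) ℝ) A⁻¹ A⁻¹)).comp S
    with hTdef
  have hInv : HasFDerivAt (fun w => (tmeSigma x w)⁻¹) T wstar := by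
    have h1 : HasFDerivAt (Ring.inverse : Matrix (Fin p) (Fin p) ℝ → _)
        (-(ContinuousLinearMap.mulLeftRight ℝ (Matrix (Fin p) (Fin p) ℝ) A⁻¹ A⁻¹)) A := by
      have := hasFDerivAt_ringInverse (𝕜 := ℝ) hAunit.unit
      rw [hAunit.unit_spec] at this
      rw [Matrix.coe_units_inv, hAunit.unit_spec] at this
      exact this
    have h2 := h1.comp wstar (hasFDerivAt_tmeSigma x wstar)
    have heq : (fun w => (tmeSigma x w)⁻¹)
        = (Ring.inverse : Matrix (Fin p) (Fin p) ℝ → _) ∘ tmeSigma x :=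
      funext fun w => Matrix.nonsing_inv_eq_ringInverse _
    rw [heq]
    exact h2
  -- componentwise derivative
  set D : Fin n → ((Fin n → ℝ) →L[ℝ] ℝ) :=
    fun j => -((q j)⁻¹ • ((evalCLM (x j) (x j)).comp T)) with hDdef
  have hcomp : ∀ j, HasFDerivAt (fun w => tmeF x w j) (D j) wstar := by
    intro j
    by_cases hj : x j = 0
    · have hfun : (fun w => tmeF x w j) = fun _ => -Real.log 0 := by
        funext w
        simp [tmeF, hj]
      have hD0 : D j = 0 := by
        have hE : evalCLM (x j) (x j) = 0 := by
          ext M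
          simp [hj]
        rw [hDdef]
        simp only [hE]
        ext v
        simp
      rw [hfun, hD0]
      exact hasFDerivAt_const _ _
    · have hqd : HasFDerivAt (fun w => x j ⬝ᵥ (tmeSigma x w)⁻¹ *ᵥ x j)
          ((evalCLM (x j) (x j)).comp T) wstar := by
        have := (evalCLM (x j) (x j)).hasFDerivAt.comp wstar hInv
        exact this
      have hne : x j ⬝ᵥ (tmeSigma x wstar)⁻¹ *ᵥ x j ≠ 0 := by
        rw [← hAdef]
        exact (hqpos j hj).ne'
      have hlog := (hqd.log hne).neg
      have : (fun w => tmeF x w j)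
          = fun w => -Real.log (x j ⬝ᵥ (tmeSigma x w)⁻¹ *ᵥ x j) := rfl
      rw [this]
      exact hlog
  have hF : HasFDerivAt (tmeF x) (ContinuousLinearMap.pi D) wstar := by
    have := hasFDerivAt_pi (φ := fun j w => tmeF x w j) (φ' := D) (x := wstar)
    exact this.2 hcomp
  have hfd : fderiv ℝ (tmeF x) wstar = ContinuousLinearMap.pi D := hF.fderiv
  -- compute D j (Pi.single i 1)
  have key : ∀ i j : Fin n, D j (Pi.single i 1)
      = Real.exp (wstar j) * ((p : ℝ) / (n : ℝ)) * Real.exp (wstar i) *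
          (x j ⬝ᵥ A⁻¹ *ᵥ x i) ^ 2 := by
    intro i j
    have hTval : T (Pi.single i 1)
        = -(A⁻¹ * (((p : ℝ) / (n : ℝ) * Real.exp (wstar i)) •
            Matrix.vecMulVec (x i) (x i)) * A⁻¹) := by
      rw [hTdef]
      show -(A⁻¹ * S (Pi.single i 1) * A⁻¹) = _
      rw [hSdef, sigmaDeriv_single x wstar i]
    have hEval : evalCLM (x j) (x j) (T (Pi.single i 1))
        = -(((p : ℝ) / (n : ℝ) * Real.exp (wstar i)) * (x j ⬝ᵥ A⁻¹ *ᵥ x i) ^ 2) := by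
      rw [hTval]
      set c := (p : ℝ) / (n : ℝ) * Real.exp (wstar i) with hc
      have hmv : (A⁻¹ * (c • Matrix.vecMulVec (x i) (x i)) * A⁻¹) *ᵥ x j
          = c • ((x i ⬝ᵥ A⁻¹ *ᵥ x j) • (A⁻¹ *ᵥ x i)) := by
        rw [← Matrix.mulVec_mulVec, ← Matrix.mulVec_mulVec]
        rw [Matrix.smul_mulVec, vecMulVec_mulVec']
        rw [Matrix.mulVec_smul, Matrix.mulVec_smul]
      simp only [evalCLM_apply, Matrix.neg_mulVec, dotProduct_neg, hmv]
      rw [dotProduct_smul, dotProduct_smul]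
      rw [hsymm (x i) (x j)]
      simp only [smul_eq_mul]
      ring
    by_cases hj : x j = 0
    · rw [hDdef]
      simp [hj, sq]
    · rw [hDdef]
      simp only [ContinuousLinearMap.neg_apply, ContinuousLinearMap.smul_apply,
        ContinuousLinearMap.comp_apply, smul_eq_mul]
      rw [hEval, hqinv j hj]
      ring
  intro i j
  constructor
  · rw [hfd, ContinuousLinearMap.pi_apply, key i j, hAdef]
  · rw [hfd, ContinuousLinearMap.pi_apply, ContinuousLinearMap.pi_apply,
      key i j, key j i, hsymm (x j) (x i)]
    ring
end

section
/- Let W be a real symmetric matrix, L the eigenspace direct sum for eigenvalues ±‖W‖, and β = max{|λ|/‖W‖ : λ an eigenvalue of W with |λ| ≠ ‖W‖} < 1. If y ∈ ℝ^n satisfies ‖Wy‖ > c‖W‖‖y‖ for some β < c ≤ 1, then ‖y − P_L y‖² < ((1−c²)/(1−β²))‖y‖², where P_L is the orthogonal projection onto L. -/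
open Matrix Module

set_option maxHeartbeats 1000000
set_option synthInstance.maxHeartbeats 200000

/-- Let `W` be real symmetric with spectral norm `‖W‖ > 0`, `L` the sum of the
eigenspaces for eigenvalues `±‖W‖`, and `β < 1` bounding `|λ|/‖W‖` over all other
eigenvalues. If `‖W y‖ > c ‖W‖ ‖y‖` with `β < c ≤ 1`, then
`‖y − P_L y‖² < ((1−c²)/(1−β²)) ‖y‖²`. -/
theorem stmt_15 {n : ℕ} (W : Matrix (Fin n) (Fin n) ℝ) (hW : W.IsHermitian)
    (hWpos : 0 < ‖Matrix.toEuclideanCLM (𝕜 := ℝ) W‖)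
    (L : Submodule ℝ (EuclideanSpace ℝ (Fin n)))
    (hL : L = Module.End.eigenspace (Matrix.toEuclideanLin W) ‖Matrix.toEuclideanCLM (𝕜 := ℝ) W‖
        ⊔ Module.End.eigenspace (Matrix.toEuclideanLin W) (-‖Matrix.toEuclideanCLM (𝕜 := ℝ) W‖))
    (β : ℝ) (hβ0 : 0 ≤ β) (hβ1 : β < 1)
    (hβ : ∀ μ : ℝ, Module.End.HasEigenvalue (Matrix.toEuclideanLin W) μ →
        |μ| ≠ ‖Matrix.toEuclideanCLM (𝕜 := ℝ) W‖ →
        |μ| ≤ β * ‖Matrix.toEuclideanCLM (𝕜 := ℝ) W‖)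
    (c : ℝ) (hc : β < c) (hc1 : c ≤ 1)
    (y : EuclideanSpace ℝ (Fin n))
    (hy : c * ‖Matrix.toEuclideanCLM (𝕜 := ℝ) W‖ * ‖y‖ < ‖Matrix.toEuclideanLin W y‖) :
    ‖y - (Submodule.orthogonalProjection L y : EuclideanSpace ℝ (Fin n))‖ ^ 2
      < ((1 - c ^ 2) / (1 - β ^ 2)) * ‖y‖ ^ 2 := by
  classical
  set T : EuclideanSpace ℝ (Fin n) →ₗ[ℝ] EuclideanSpace ℝ (Fin n) := Matrix.toEuclideanLin W with hT
  set Nm : ℝ := ‖Matrix.toEuclideanCLM (𝕜 := ℝ) W‖ with hNm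
  have hsym : T.IsSymmetric := Matrix.isHermitian_iff_isSymmetric.mp hW
  have hfr : Module.finrank ℝ (EuclideanSpace ℝ (Fin n)) = n := finrank_euclideanSpace_fin
  set B := hsym.eigenvectorBasis hfr with hB
  set μ := hsym.eigenvalues hfr with hμ
  set u : EuclideanSpace ℝ (Fin n) := (Submodule.orthogonalProjection L y : EuclideanSpace ℝ (Fin n)) with hu
  set v : EuclideanSpace ℝ (Fin n) := y - u with hv
  -- norms as sums of squared coordinates
  have hns : ∀ x : EuclideanSpace ℝ (Fin n), ‖x‖ ^ 2 = ∑ i, (B.repr x i) ^ 2 := by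
    intro x
    rw [← B.repr.norm_map x, EuclideanSpace.norm_eq, Real.sq_sqrt (by positivity)]
    simp [sq_abs]
  -- coordinates of T x
  have hTx : ∀ x : EuclideanSpace ℝ (Fin n), ∀ i, B.repr (T x) i = μ i * B.repr x i := by
    intro x i
    exact hsym.eigenvectorBasis_apply_self_apply hfr x i
  -- each eigenvalue bounded by Nm
  have hCLM : ∀ x : EuclideanSpace ℝ (Fin n), (Matrix.toEuclideanCLM (𝕜 := ℝ) W) x = T x := by
    intro x
    rw [hT, ← Matrix.coe_toEuclideanCLM_eq_toEuclideanLin]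
    rfl
  have hbound : ∀ i, |μ i| ≤ Nm := by
    intro i
    have h1 : T (B i) = μ i • B i := hsym.apply_eigenvectorBasis hfr i
    have h2 : ‖B i‖ = 1 := (hsym.eigenvectorBasis hfr).orthonormal.1 i
    have h3 := (Matrix.toEuclideanCLM (𝕜 := ℝ) W).le_opNorm (B i)
    rw [hCLM, h1, norm_smul, h2, mul_one, mul_one] at h3
    simpa using h3
  have hvL : v ∈ Lᗮ := Submodule.sub_starProjection_mem_orthogonal (K := L) y
  have huL : u ∈ L := (Submodule.orthogonalProjection L y).2
  -- key pointwise estimate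
  have hkey : ∀ i, (μ i)^2 * (B.repr y i)^2 ≤ Nm^2 * (B.repr u i)^2 + β^2 * Nm^2 * (B.repr v i)^2 ∧
      B.repr u i * B.repr v i = 0 := by
    intro i
    have hrepr : ∀ x : EuclideanSpace ℝ (Fin n), B.repr x i = inner ℝ (B i) x :=
      fun x => B.repr_apply_apply x i
    have hmem : B i ∈ Module.End.eigenspace T (μ i) :=
      (hsym.hasEigenvector_eigenvectorBasis hfr i).1
    have hyuv : B.repr y i = B.repr u i + B.repr v i := by
      have : y = u + v := by rw [hv]; abel
      rw [this, map_add]; rfl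
    by_cases hcase : |μ i| = Nm
    · -- B i ∈ L, so v-coordinate vanishes
      have hBiL : B i ∈ L := by
        rw [hL]
        rcases abs_eq (le_of_lt hWpos) |>.mp hcase with h | h
        · exact Submodule.mem_sup_left (h ▸ hmem)
        · exact Submodule.mem_sup_right (h ▸ hmem)
      have hvz : B.repr v i = 0 := by
        rw [hrepr]
        exact (Submodule.mem_orthogonal L v).mp hvL (B i) hBiL
      constructor
      · rw [hyuv, hvz, add_zero]
        have h4 : (μ i)^2 = Nm^2 := by rw [← sq_abs, hcase]
        simp [h4]
      · rw [hvz, mul_zero]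
    · -- B i orthogonal to L, so u-coordinate vanishes
      have hβi : |μ i| ≤ β * Nm := hβ (μ i) (hsym.hasEigenvalue_eigenvalues hfr i) hcase
      have hBiLperp : ∀ w ∈ L, inner ℝ (B i) w = (0:ℝ) := by
        intro w hw
        rw [hL] at hw
        rcases Submodule.mem_sup.mp hw with ⟨w1, hw1, w2, hw2, rfl⟩
        have hne1 : μ i ≠ Nm := fun h => hcase (by rw [h, abs_of_pos hWpos])
        have hne2 : μ i ≠ -Nm := fun h => hcase (by rw [h, abs_neg, abs_of_pos hWpos])
        have o1 : inner ℝ (B i) w1 = (0:ℝ) :=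
          hsym.orthogonalFamily_eigenspaces hne1 ⟨B i, hmem⟩ ⟨w1, hw1⟩
        have o2 : inner ℝ (B i) w2 = (0:ℝ) :=
          hsym.orthogonalFamily_eigenspaces hne2 ⟨B i, hmem⟩ ⟨w2, hw2⟩
        rw [inner_add_right, o1, o2, add_zero]
      have huz : B.repr u i = 0 := by rw [hrepr]; exact hBiLperp u huL
      constructor
      · rw [hyuv, huz, zero_add]
        have h1 : (μ i)^2 ≤ (β * Nm)^2 := by
          rw [← sq_abs (μ i)]
          exact pow_le_pow_left₀ (abs_nonneg _) hβi 2
        nlinarith [sq_nonneg (B.repr v i)]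
      · rw [huz, zero_mul]
  -- main inequality: ‖T y‖² ≤ Nm²‖u‖² + β²Nm²‖v‖²
  have hmain : ‖T y‖^2 ≤ Nm^2 * ‖u‖^2 + β^2 * Nm^2 * ‖v‖^2 := by
    rw [hns (T y), hns u, hns v, Finset.mul_sum, Finset.mul_sum, ← Finset.sum_add_distrib]
    apply Finset.sum_le_sum
    intro i _
    rw [hTx y i, mul_pow]
    exact (hkey i).1
  -- Pythagoras
  have hpyth : ‖y‖^2 = ‖u‖^2 + ‖v‖^2 := by
    rw [hns y, hns u, hns v, ← Finset.sum_add_distrib]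
    apply Finset.sum_congr rfl
    intro i _
    have hyuv : B.repr y i = B.repr u i + B.repr v i := by
      have : y = u + v := by rw [hv]; abel
      rw [this, map_add]; rfl
    rw [hyuv]; linear_combination 2 * (hkey i).2
  -- squared hypothesis
  have hc0 : 0 < c := lt_of_le_of_lt hβ0 hc
  have hysq : c^2 * Nm^2 * ‖y‖^2 < ‖T y‖^2 := by
    have h0 : 0 ≤ c * Nm * ‖y‖ := by positivity
    nlinarith [hy, norm_nonneg (T y)]
  -- conclude by algebra
  have hβ2 : (0:ℝ) < 1 - β^2 := by nlinarith
  have hN2 : (0:ℝ) < Nm^2 := by positivity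
  have hdiv : c^2 * ‖y‖^2 < ‖u‖^2 + β^2 * ‖v‖^2 := by
    have h := lt_of_lt_of_le hysq hmain
    have h' : Nm^2 * (c^2 * ‖y‖^2) < Nm^2 * (‖u‖^2 + β^2 * ‖v‖^2) := by linarith [h]
    exact lt_of_mul_lt_mul_left h' hN2.le
  rw [div_mul_eq_mul_div, lt_div_iff₀ hβ2]
  rw [hpyth] at hdiv ⊢
  nlinarith [hdiv]
end
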